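/- arXiv:2403.07418 — 5 statements merged into one kernel-verified Lean document; each statement's English description precedes it below -/
import Mathlib

section
/- Let λ be a self-conjugate partition with r rectangular blocks and block map f_λ : [ℓ(λ)] → [r]. Then for all i, j in [ℓ(λ)], the box (i,j) belongs to the Young diagram of λ if and only if f_λ(i) + f_λ(j) ≤ r + 1. -/
def cellMem (L : ℕ → ℕ) (i j : ℕ) : Prop := 1 ≤ i ∧ 1 ≤ j ∧ j ≤ L i

def IsPartitionOfLength (L : ℕ → ℕ) (l : ℕ) : Prop :=
  (∀ i j, 1 ≤ i → i ≤ j → L j ≤ L i) ∧ ∀ i, 1 ≤ i → (1 ≤ L i ↔ i ≤ l)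

def SelfConjugate (L : ℕ → ℕ) : Prop := ∀ i j, cellMem L i j ↔ cellMem L j i

/-- Last index of block `n`. -/
def eBlk (f : ℕ → ℕ) (l n : ℕ) : ℕ := Nat.findGreatest (fun j => f j = n) l

/-- Largest column-block that row-block `m` reaches. -/
def nuB (f b : ℕ → ℕ) (l r m : ℕ) : ℕ := Nat.findGreatest (fun n => eBlk f l n ≤ b m) r

/-- Lemma 2.1: for a self-conjugate partition with `r` blocks and block map `f`,
a box `(i, j)` lies in `λ` iff `f i + f j ≤ r + 1`. -/
theorem stmt0 (L : ℕ → ℕ) (l r : ℕ) (b f : ℕ → ℕ)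
    (hl : 1 ≤ l)
    (hpart : IsPartitionOfLength L l)
    (hsc : SelfConjugate L)
    (hb : ∀ m n, 1 ≤ m → m < n → n ≤ r → b n < b m)
    (hf_mono : ∀ i j, 1 ≤ i → i ≤ j → j ≤ l → f i ≤ f j)
    (hf_range : ∀ i, 1 ≤ i → i ≤ l → 1 ≤ f i ∧ f i ≤ r)
    (hf_surj : ∀ n, 1 ≤ n → n ≤ r → ∃ i, 1 ≤ i ∧ i ≤ l ∧ f i = n)
    (hf_block : ∀ i, 1 ≤ i → i ≤ l → L i = b (f i)) :
    ∀ i j, 1 ≤ i → i ≤ l → 1 ≤ j → j ≤ l →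
      (cellMem L i j ↔ f i + f j ≤ r + 1) := by
  -- symmetry of cell membership
  have hsym : ∀ i j, 1 ≤ i → 1 ≤ j → (j ≤ L i ↔ i ≤ L j) := by
    intro i j hi hj
    have h := hsc i j
    simp only [cellMem] at h
    constructor
    · intro hji
      exact (h.mp ⟨hi, hj, hji⟩).2.2
    · intro hij
      exact (h.mpr ⟨hj, hi, hij⟩).2.2
  have hr1 : 1 ≤ r := le_trans (hf_range 1 le_rfl hl).1 (hf_range 1 le_rfl hl).2
  -- first row has length l
  have hL1 : L 1 = l := by
    have h1 : ∀ j, 1 ≤ j → (j ≤ L 1 ↔ j ≤ l) := fun j hj =>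
      (hsym 1 j le_rfl hj).trans (hpart.2 j hj)
    have hge : l ≤ L 1 := (h1 l hl).mpr le_rfl
    have hpos : 1 ≤ L 1 := (hpart.2 1 le_rfl).mpr hl
    exact le_antisymm ((h1 (L 1) hpos).mp le_rfl) hge
  have hLle : ∀ i, 1 ≤ i → L i ≤ l := fun i hi => hL1 ▸ hpart.1 1 i le_rfl hi
  have hf1 : f 1 = 1 := by
    obtain ⟨i0, hi01, hi0l, hfi0⟩ := hf_surj 1 le_rfl hr1
    exact le_antisymm (hfi0 ▸ hf_mono 1 i0 le_rfl hi01 hi0l) (hf_range 1 le_rfl hl).1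
  have hfl : f l = r := by
    obtain ⟨i0, hi01, hi0l, hfi0⟩ := hf_surj r hr1 le_rfl
    exact le_antisymm (hf_range l hl le_rfl).2 (hfi0 ▸ hf_mono i0 l hi01 hi0l le_rfl)
  -- basic facts about eBlk
  have he : ∀ n, 1 ≤ n → n ≤ r → f (eBlk f l n) = n ∧ 1 ≤ eBlk f l n ∧ eBlk f l n ≤ l := by
    intro n hn1 hnr
    obtain ⟨i0, hi01, hi0l, hfi0⟩ := hf_surj n hn1 hnr
    have hle : i0 ≤ eBlk f l n := Nat.le_findGreatest hi0l hfi0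
    exact ⟨Nat.findGreatest_spec (P := fun j => f j = n) hi0l hfi0, le_trans hi01 hle,
      Nat.findGreatest_le l⟩
  have hjle : ∀ n, 1 ≤ n → n ≤ r → ∀ j, 1 ≤ j → j ≤ l → (j ≤ eBlk f l n ↔ f j ≤ n) := by
    intro n hn1 hnr j hj1 hjl
    obtain ⟨hfe, he1, hel⟩ := he n hn1 hnr
    constructor
    · intro h
      exact hfe ▸ hf_mono j (eBlk f l n) hj1 h hel
    · intro h
      by_contra hlt
      push_neg at hlt
      have h1 : f j ≠ n := Nat.findGreatest_is_greatest (P := fun j' => f j' = n) hlt hjl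
      have h2 : n ≤ f j := hfe ▸ hf_mono (eBlk f l n) j he1 (le_of_lt hlt) hjl
      omega
  have hemono : ∀ m n, 1 ≤ m → m < n → n ≤ r → eBlk f l m < eBlk f l n := by
    intro m n hm1 hmn hnr
    obtain ⟨hfem, hem1, heml⟩ := he m hm1 (le_of_lt (lt_of_lt_of_le hmn hnr))
    obtain ⟨hfen, hen1, henl⟩ := he n (le_trans hm1 (le_of_lt hmn)) hnr
    by_contra h
    push_neg at h
    have := hf_mono (eBlk f l n) (eBlk f l m) hen1 h heml
    omega
  -- f at the successor of a block end
  have hsucc : ∀ n, 1 ≤ n → n < r → f (eBlk f l n + 1) = n + 1 := by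
    intro n hn1 hnr
    obtain ⟨hfen, hen1, henl⟩ := he n hn1 (le_of_lt hnr)
    obtain ⟨hfen', hen1', henl'⟩ := he (n + 1) (by omega) hnr
    have hlt : eBlk f l n < eBlk f l (n + 1) := hemono n (n + 1) hn1 (by omega) hnr
    have h1l : eBlk f l n + 1 ≤ l := by omega
    have hge : n ≤ f (eBlk f l n + 1) := by
      have h := hf_mono (eBlk f l n) (eBlk f l n + 1) hen1 (by omega) h1l
      rw [hfen] at h
      exact h
    have hne : f (eBlk f l n + 1) ≠ n := by
      exact Nat.findGreatest_is_greatest (P := fun j' => f j' = n) (Nat.lt_succ_self _) h1l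
    have hle : f (eBlk f l n + 1) ≤ n + 1 := by
      have h := hf_mono (eBlk f l n + 1) (eBlk f l (n + 1)) (by omega) (by omega) henl'
      rw [hfen'] at h
      exact h
    omega
  -- well-definedness: whether column j is in row i depends only on the block of j
  have hwd : ∀ i j j', 1 ≤ i → i ≤ l → 1 ≤ j → j ≤ l → 1 ≤ j' → j' ≤ l → f j = f j' →
      (j ≤ L i ↔ j' ≤ L i) := by
    intro i j j' hi1 hil hj1 hjl hj1' hjl' hff
    have h1 : L j = L j' := by
      rw [hf_block j hj1 hjl, hf_block j' hj1' hjl', hff]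
    rw [hsym i j hi1 hj1, h1, ← hsym i j' hi1 hj1']
  -- eBlk at r is l
  have herl : eBlk f l r = l := by
    have h1 : l ≤ eBlk f l r := Nat.le_findGreatest le_rfl hfl
    exact le_antisymm (Nat.findGreatest_le l) h1
  -- b m = L (eBlk f l m)
  have hbm : ∀ m, 1 ≤ m → m ≤ r → b m = L (eBlk f l m) := by
    intro m hm1 hmr
    obtain ⟨hfem, hem1, heml⟩ := he m hm1 hmr
    rw [hf_block _ hem1 heml, hfem]
  have hbml : ∀ m, 1 ≤ m → m ≤ r → b m ≤ l := by
    intro m hm1 hmr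
    rw [hbm m hm1 hmr]
    exact hLle _ (he m hm1 hmr).2.1
  -- nu basic facts
  have hnu_pos : ∀ m, 1 ≤ m → m ≤ r → 1 ≤ nuB f b l r m := by
    intro m hm1 hmr
    obtain ⟨hfe1, he11, he1l⟩ := he 1 le_rfl hr1
    obtain ⟨hfem, hem1, heml⟩ := he m hm1 hmr
    have hL1' : L (eBlk f l 1) = l := by
      rw [hf_block _ he11 he1l, hfe1, ← hf1, ← hf_block 1 le_rfl hl, hL1]
    have h1 : eBlk f l 1 ≤ b m := by
      rw [hbm m hm1 hmr, hsym _ _ hem1 he11, hL1']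
      exact heml
    exact Nat.le_findGreatest hr1 h1
  have hnu_le : ∀ m, nuB f b l r m ≤ r := fun m => Nat.findGreatest_le r
  have hnu_spec : ∀ m, 1 ≤ m → m ≤ r → eBlk f l (nuB f b l r m) ≤ b m := by
    intro m hm1 hmr
    obtain ⟨hfe1, he11, he1l⟩ := he 1 le_rfl hr1
    obtain ⟨hfem, hem1, heml⟩ := he m hm1 hmr
    have hL1' : L (eBlk f l 1) = l := by
      rw [hf_block _ he11 he1l, hfe1, ← hf1, ← hf_block 1 le_rfl hl, hL1]
    have h1 : eBlk f l 1 ≤ b m := by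
      rw [hbm m hm1 hmr, hsym _ _ hem1 he11, hL1']
      exact heml
    exact Nat.findGreatest_spec (P := fun n => eBlk f l n ≤ b m) hr1 h1
  -- the key identity: b m = eBlk f l (nu m)
  have hkey : ∀ m, 1 ≤ m → m ≤ r → b m = eBlk f l (nuB f b l r m) := by
    intro m hm1 hmr
    set n := nuB f b l r m with hn
    have hn1 : 1 ≤ n := hnu_pos m hm1 hmr
    have hnr : n ≤ r := hnu_le m
    have hspec : eBlk f l n ≤ b m := hnu_spec m hm1 hmr
    rcases eq_or_lt_of_le hnr with heq | hltr
    · rw [heq, herl] at hspec ⊢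
      exact le_antisymm (hbml m hm1 hmr) hspec
    · -- n < r
      have hnot : ¬ eBlk f l (n + 1) ≤ b m := by
        have h := Nat.findGreatest_is_greatest (P := fun k => eBlk f l k ≤ b m) (n := r)
          (k := n + 1) (Nat.lt_succ_self n) hltr
        exact h
      obtain ⟨hfem, hem1, heml⟩ := he m hm1 hmr
      obtain ⟨hfen, hen1, henl⟩ := he n hn1 (le_of_lt hltr)
      obtain ⟨hfen', hen1', henl'⟩ := he (n + 1) (by omega) hltr
      have hs : f (eBlk f l n + 1) = n + 1 := hsucc n hn1 hltr
      have hlt : eBlk f l n < eBlk f l (n + 1) := hemono n (n + 1) hn1 (by omega) hltr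
      have hwd' : (eBlk f l (n + 1) ≤ L (eBlk f l m) ↔ eBlk f l n + 1 ≤ L (eBlk f l m)) :=
        hwd (eBlk f l m) (eBlk f l (n + 1)) (eBlk f l n + 1) hem1 heml hen1' henl'
          (by omega) (by omega) (by rw [hfen', hs])
      rw [hbm m hm1 hmr] at hnot hspec ⊢
      rw [hwd'] at hnot
      omega
  -- nu is strictly antitone
  have hnu_anti : ∀ m m', 1 ≤ m → m < m' → m' ≤ r → nuB f b l r m' < nuB f b l r m := by
    intro m m' hm1 hmm hmr
    have hbb : b m' < b m := hb m m' hm1 hmm hmr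
    have h1 := hkey m hm1 (le_of_lt (lt_of_lt_of_le hmm hmr))
    have h2 := hkey m' (by omega) hmr
    by_contra h
    push_neg at h
    rcases eq_or_lt_of_le h with heq | hlt
    · rw [h1, h2, heq] at hbb
      omega
    · have := hemono _ _ (hnu_pos m hm1 (by omega)) hlt (hnu_le m')
      omega
  -- nu 1 = r
  have hnu1 : nuB f b l r 1 = r := by
    have hb1 : b 1 = l := by
      rw [← hf1, ← hf_block 1 le_rfl hl, hL1]
    have h1 : eBlk f l r ≤ b 1 := by rw [herl, hb1]
    exact le_antisymm (hnu_le 1) (Nat.le_findGreatest le_rfl h1)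
  -- descending inequality
  have hA : ∀ d m, 1 ≤ m → m + d ≤ r → nuB f b l r (m + d) + d ≤ nuB f b l r m := by
    intro d
    induction d with
    | zero => intro m _ _; simp
    | succ d ih =>
      intro m hm1 hmd
      have h1 : nuB f b l r (m + d + 1) < nuB f b l r (m + d) :=
        hnu_anti (m + d) (m + d + 1) (by omega) (by omega) (by omega)
      have h2 := ih m hm1 (by omega)
      show nuB f b l r (m + d + 1) + (d + 1) ≤ nuB f b l r m
      omega
  have hnu_eq : ∀ m, 1 ≤ m → m ≤ r → nuB f b l r m + m = r + 1 := by
    intro m hm1 hmr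
    have h1 := hA (m - 1) 1 le_rfl (by omega)
    have h2 := hA (r - m) m hm1 (by omega)
    have e1 : 1 + (m - 1) = m := by omega
    have e2 : m + (r - m) = r := by omega
    rw [e1, hnu1] at h1
    rw [e2] at h2
    have h3 := hnu_pos r hr1 le_rfl
    omega
  -- conclusion
  intro i j hi1 hil hj1 hjl
  have hfi := hf_range i hi1 hil
  have hfj := hf_range j hj1 hjl
  have hLi : L i = eBlk f l (nuB f b l r (f i)) := by
    rw [hf_block i hi1 hil, hkey (f i) hfi.1 hfi.2]
  have hnui1 : 1 ≤ nuB f b l r (f i) := hnu_pos (f i) hfi.1 hfi.2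
  have hnuir : nuB f b l r (f i) ≤ r := hnu_le (f i)
  have hiff : j ≤ L i ↔ f j ≤ nuB f b l r (f i) := by
    rw [hLi]
    exact hjle _ hnui1 hnuir j hj1 hjl
  have heqn := hnu_eq (f i) hfi.1 hfi.2
  constructor
  · intro ⟨_, _, hc⟩
    have := hiff.mp hc
    omega
  · intro h
    exact ⟨hi1, hj1, hiff.mpr (by omega)⟩
end

section
/- A partition λ is minimal (i.e., λ = Nμ for a partition μ and positive integer N implies N = 1) if and only if the gcd of all parts of λ and all parts of its conjugate λ' equals 1. -/
/-- The dilation `Nλ` of a partition: row `i` of `Nλ` is `N` times row `⌈i/N⌉` of `λ`. -/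
def dilate (N : ℕ) (L : ℕ → ℕ) : ℕ → ℕ := fun i => N * L ((i + N - 1) / N)

/-- The conjugate partition: `λ′_j = #{i ≥ 1 : λ_i ≥ j}`. -/
noncomputable def conjPart (L : ℕ → ℕ) : ℕ → ℕ := fun j => Set.ncard {i : ℕ | 1 ≤ i ∧ j ≤ L i}

/-- A partition is minimal if it is not a nontrivial dilation of another partition. -/
def IsMinimal (L : ℕ → ℕ) : Prop :=
  ∀ (N : ℕ) (M : ℕ → ℕ) (m : ℕ), 1 ≤ N → IsPartitionOfLength M m →
    (∀ i, 1 ≤ i → L i = dilate N M i) → N = 1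


lemma ceil_le_iff {N : ℕ} (hN : 1 ≤ N) (j x : ℕ) : (j + N - 1) / N ≤ x ↔ j ≤ N * x := by
  rw [Nat.div_le_iff_le_mul_add_pred hN]
  omega

lemma ceil_pos {N : ℕ} (hN : 1 ≤ N) {i : ℕ} (hi : 1 ≤ i) : 1 ≤ (i + N - 1) / N := by
  by_contra h
  have h0 : (i + N - 1) / N ≤ 0 := by omega
  have := (ceil_le_iff hN i 0).mp h0
  rw [mul_zero] at this
  omega

lemma icc_of_dc (S : Set ℕ) (m : ℕ) (hsub : S ⊆ Set.Icc 1 m)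
    (hdc : ∀ a b, 1 ≤ a → a ≤ b → b ∈ S → a ∈ S) :
    S = Set.Icc 1 S.ncard := by
  have hfin : S.Finite := (Set.finite_Icc 1 m).subset hsub
  rcases S.eq_empty_or_nonempty with h | hne
  · rw [h, Set.ncard_empty]
    exact (Set.Icc_eq_empty (by norm_num)).symm
  · obtain ⟨n, hn, hbig⟩ : ∃ n, n ∈ S ∧ ∀ i ∈ S, i ≤ n :=
      ⟨sSup S, hne.csSup_mem hfin, fun i hi => le_csSup hfin.bddAbove hi⟩
    have hIcc : S = Set.Icc 1 n := by
      ext i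
      constructor
      · exact fun hi => ⟨(hsub hi).1, hbig i hi⟩
      · exact fun hi => hdc i n hi.1 hi.2 hn
    rw [hIcc]
    have : (Set.Icc 1 n).ncard = n := by
      rw [← Finset.coe_Icc, Set.ncard_coe_finset, Nat.card_Icc]
      omega
    rw [this]

lemma conj_spec (L : ℕ → ℕ) (l : ℕ) (hL : IsPartitionOfLength L l) (j : ℕ) (hj : 1 ≤ j) :
    ∀ i, 1 ≤ i → (j ≤ L i ↔ i ≤ conjPart L j) := by
  have hset : {i : ℕ | 1 ≤ i ∧ j ≤ L i} = Set.Icc 1 (conjPart L j) := by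
    apply icc_of_dc _ l
    · intro i hi
      exact ⟨hi.1, (hL.2 i hi.1).mp (le_trans hj hi.2)⟩
    · intro a b ha hab hb
      exact ⟨ha, le_trans hb.2 (hL.1 a b ha hab)⟩
  intro i hi
  constructor
  · intro h
    have h2 : i ∈ {i : ℕ | 1 ≤ i ∧ j ≤ L i} := ⟨hi, h⟩
    rw [hset] at h2
    exact h2.2
  · intro h
    have h2 : i ∈ Set.Icc 1 (conjPart L j) := ⟨hi, h⟩
    rw [← hset] at h2
    exact h2.2

/-- A partition is minimal iff the gcd of all its parts and all parts of its
conjugate is `1`, i.e. every common divisor of all the parts of `λ` and `λ′` is `1`. -/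
theorem stmt3 (L : ℕ → ℕ) (l : ℕ) (hl : 1 ≤ l) (hL : IsPartitionOfLength L l) :
    IsMinimal L ↔
      (∀ d : ℕ, (∀ i, 1 ≤ i → i ≤ l → d ∣ L i) →
        (∀ j, 1 ≤ j → j ≤ L 1 → d ∣ conjPart L j) → d = 1) := by
  constructor
  · intro hmin d hdL hdC
    have hL1 : 1 ≤ L 1 := (hL.2 1 le_rfl).mpr hl
    have hd : 1 ≤ d := by
      rcases Nat.eq_zero_or_pos d with h | h
      · exfalso
        have := hdL 1 le_rfl hl
        rw [h, Nat.zero_dvd] at this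
        omega
      · exact h
    have spec := fun j hj => conj_spec L l hL j hj
    have hconj1 : conjPart L 1 = l := by
      have s := spec 1 le_rfl
      have h1 : l ≤ conjPart L 1 := (s l hl).mp ((hL.2 l hl).mpr le_rfl)
      have h2 : conjPart L 1 ≤ l := by
        by_cases hc : 1 ≤ conjPart L 1
        · exact (hL.2 _ hc).mp ((s _ hc).mpr le_rfl)
        · omega
      omega
    have hdl : d ∣ l := hconj1 ▸ hdC 1 le_rfl hL1
    -- L is constant on blocks of length d
    have hblock : ∀ i, 1 ≤ i → L i = L (d * ((i + d - 1) / d)) := by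
      intro i hi
      set k := (i + d - 1) / d with hk
      have hik : i ≤ d * k := (ceil_le_iff hd i k).mp le_rfl
      have hk1 : 1 ≤ k := ceil_pos hd hi
      have hdk1 : 1 ≤ d * k := Nat.mul_pos hd hk1
      have hle1 : L (d * k) ≤ L i := hL.1 i (d * k) hi hik
      by_cases hLi : 1 ≤ L i
      · have hjL1 : L i ≤ L 1 := hL.1 1 i le_rfl hi
        have hdn : d ∣ conjPart L (L i) := hdC (L i) hLi hjL1
        have hin : i ≤ conjPart L (L i) := (spec (L i) hLi i hi).mp le_rfl
        obtain ⟨q, hq⟩ := hdn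
        have hiq : i ≤ d * q := hq ▸ hin
        have hkq : k ≤ q := (ceil_le_iff hd i q).mpr hiq
        have hdkn : d * k ≤ conjPart L (L i) := by
          rw [hq]
          exact mul_le_mul_right hkq d
        have := (spec (L i) hLi (d * k) hdk1).mpr hdkn
        omega
      · omega
    -- d divides the value on each block
    have hdiv : ∀ k, 1 ≤ k → d ∣ L (d * k) := by
      intro k hk
      by_cases h : d * k ≤ l
      · exact hdL (d * k) (Nat.mul_pos hd hk) h
      · have h1 : ¬ 1 ≤ L (d * k) := fun h' => h ((hL.2 _ (Nat.mul_pos hd hk)).mp h')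
        have h2 : L (d * k) = 0 := by omega
        rw [h2]
        exact dvd_zero d
    refine hmin d (fun k => L (d * k) / d) (l / d) hd ⟨?_, ?_⟩ ?_
    · intro a b ha hab
      exact Nat.div_le_div_right
        (hL.1 (d * a) (d * b) (Nat.mul_pos hd ha) (mul_le_mul_right hab d))
    · intro k hk
      have hdvd := hdiv k hk
      have h1 : 1 ≤ L (d * k) / d ↔ d ≤ L (d * k) := Nat.one_le_div_iff hd
      have h2 : d ≤ L (d * k) ↔ 1 ≤ L (d * k) :=
        ⟨fun h => by omega, fun h => Nat.le_of_dvd h hdvd⟩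
      have h3 : 1 ≤ L (d * k) ↔ d * k ≤ l := hL.2 (d * k) (Nat.mul_pos hd hk)
      have h4 : d * k ≤ l ↔ k ≤ l / d := by
        obtain ⟨q, hq⟩ := hdl
        subst hq
        rw [Nat.mul_div_cancel_left q hd]
        exact ⟨fun h => Nat.le_of_mul_le_mul_left h hd, fun h => mul_le_mul_right h d⟩
      simp only [h1, h2, h3, h4]
    · intro i hi
      show L i = d * (L (d * ((i + d - 1) / d)) / d)
      rw [Nat.mul_div_cancel' (hdiv _ (ceil_pos hd hi))]
      exact hblock i hi
  · intro hgcd N M m hN hM heq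
    apply hgcd N
    · intro i hi _
      rw [heq i hi]
      exact Dvd.intro _ rfl
    · intro j hj hjL1
      set c := (j + N - 1) / N with hc
      have hc1 : 1 ≤ c := ceil_pos hN hj
      set T := {k : ℕ | 1 ≤ k ∧ c ≤ M k} with hT
      have hTicc : T = Set.Icc 1 T.ncard := by
        apply icc_of_dc _ m
        · intro k hk
          exact ⟨hk.1, (hM.2 k hk.1).mp (le_trans hc1 hk.2)⟩
        · intro a b ha hab hb
          exact ⟨ha, le_trans hb.2 (hM.1 a b ha hab)⟩
      set t := T.ncard with ht
      have hset : {i : ℕ | 1 ≤ i ∧ j ≤ L i} = Set.Icc 1 (N * t) := by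
        ext i
        simp only [Set.mem_setOf_eq, Set.mem_Icc]
        constructor
        · rintro ⟨hi, hji⟩
          refine ⟨hi, ?_⟩
          rw [heq i hi] at hji
          have hcM : c ≤ M ((i + N - 1) / N) := (ceil_le_iff hN j _).mpr hji
          have hmem : (i + N - 1) / N ∈ T := ⟨ceil_pos hN hi, hcM⟩
          rw [hTicc] at hmem
          exact (ceil_le_iff hN i t).mp hmem.2
        · rintro ⟨hi, hit⟩
          refine ⟨hi, ?_⟩
          rw [heq i hi]
          have hkt : (i + N - 1) / N ≤ t := (ceil_le_iff hN i t).mpr hit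
          have hmem : (i + N - 1) / N ∈ T := by
            rw [hTicc]
            exact ⟨ceil_pos hN hi, hkt⟩
          exact (ceil_le_iff hN j _).mp hmem.2
      have hval : conjPart L j = N * t := by
        show Set.ncard _ = N * t
        rw [hset, ← Finset.coe_Icc, Set.ncard_coe_finset, Nat.card_Icc]
        omega
      rw [hval]
      exact Dvd.intro t rfl
end

section
/- The number of r-plane trees on k+1 vertices equals (r/(k+1)) · binom((r+1)k, k) for all k ≥ 0. -/
inductive LTree where
  | node : ℕ → List LTree → LTree

namespace LTree

def label : LTree → ℕ
  | node a _ => a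

def size : LTree → ℕ
  | node _ ts => 1 + (ts.attach.map (fun t => size t.1)).sum
decreasing_by
  have := List.sizeOf_lt_of_mem t.2
  simp only [node.sizeOf_spec]
  omega

def countLabel (i : ℕ) : LTree → ℕ
  | node a ts => (if a = i then 1 else 0) + (ts.attach.map (fun t => countLabel i t.1)).sum
decreasing_by
  have := List.sizeOf_lt_of_mem t.2
  simp only [node.sizeOf_spec]
  omega

def Valid (P : ℕ → ℕ → Prop) : LTree → Prop
  | node a ts => ∀ t ∈ ts, P a t.label ∧ Valid P t
decreasing_by
  have := List.sizeOf_lt_of_mem ‹_ ∈ _›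
  simp only [node.sizeOf_spec]
  omega

def LabelsLe (l : ℕ) : LTree → Prop
  | node a ts => (1 ≤ a ∧ a ≤ l) ∧ ∀ t ∈ ts, LabelsLe l t
decreasing_by
  have := List.sizeOf_lt_of_mem ‹_ ∈ _›
  simp only [node.sizeOf_spec]
  omega

end LTree

/-- A `λ`-plane tree: labels in `[1, l]` and every edge `{u, v}` satisfies
`(c u, c v) ∈ λ`. -/
def IsLambdaPlaneTree (L : ℕ → ℕ) (l : ℕ) (t : LTree) : Prop :=
  LTree.LabelsLe l t ∧ LTree.Valid (fun u v => cellMem L u v) t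

/-- An `r`-plane tree: labels in `[1, r]` and every edge `{u, v}` satisfies
`c u + c v ≤ r + 1`. -/
def IsRPlaneTree (r : ℕ) (t : LTree) : Prop :=
  LTree.LabelsLe r t ∧ LTree.Valid (fun u v => u + v ≤ r + 1) t

/-- `C_k^λ`: the number of `λ`-plane trees on `k + 1` vertices. -/
noncomputable def lambdaPlaneCount (L : ℕ → ℕ) (l k : ℕ) : ℕ :=
  Nat.card {t : LTree // t.size = k + 1 ∧ IsLambdaPlaneTree L l t}

/-- The number of `r`-plane trees on `k + 1` vertices. -/
noncomputable def rPlaneCount (r k : ℕ) : ℕ :=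
  Nat.card {t : LTree // t.size = k + 1 ∧ IsRPlaneTree r t}

/-!
Cut an `r`-plane tree at its root: a root labelled `a ∈ [1, r]` carries a sequence of subtrees
whose root labels are at most `r + 1 - a`. If `F_m` is the generating function (by number of
vertices) of such sequences with root labels at most `m`, then
`F_m = 1 / (1 - x ∑_{a ≤ m} F_{r+1-a})`, and `F_m = B^m` for `m ≤ r`, where
`B = 1 + x B^(r+1)`: with `x B^(r+1) = B - 1` the sum telescopes. The trees themselves then
have generating function `x ∑_{j=1}^r B^j = 1 - B^(-r)`. Both steps are carried out on
coefficients: `[x^n] B^m` is the Raney number `m / ((r+1) n + m) * C((r+1) n + m, n)` for every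
integer `m`, and at `m = -r` it gives `-(r / (k+1)) C((r+1) k, k)`.
-/

open Finset

/-- The Raney number `m / (p n + m) * C(p n + m, n)`, written without division so that it is an
integer for every `m ∈ ℤ`; as a function of `n` it is the coefficient sequence of `B^m`, where
`B = 1 + x B^p`. -/
def raney (p m : ℤ) : ℕ → ℤ
  | 0 => 1
  | n + 1 => Ring.choose (p * (n + 1) + m) (n + 1) - p * Ring.choose (p * (n + 1) + m - 1) n

@[simp]
theorem raney_zero_right (p m : ℤ) : raney p m 0 = 1 := rfl

theorem succ_mul_raney_succ (p m : ℤ) (n : ℕ) :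
    (n + 1) * raney p m (n + 1) = m * Ring.choose (p * (n + 1) + m - 1) n := by
  have absorb := Ring.choose_smul_choose (p * (n + 1) + m) (Nat.le_add_left 1 n)
  simp only [Nat.choose_one_right, nsmul_eq_mul, Ring.choose_one_right, Nat.add_sub_cancel,
    Nat.cast_add, Nat.cast_one] at absorb
  rw [raney]
  linear_combination absorb

theorem raney_zero_succ (p : ℤ) (n : ℕ) : raney p 0 (n + 1) = 0 := by
  have h := succ_mul_raney_succ p 0 n
  rw [zero_mul] at h
  exact (mul_eq_zero.1 h).resolve_left (by positivity)

theorem raney_add_one_sub_raney (p m : ℤ) (n : ℕ) :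
    raney p (m + 1) (n + 1) - raney p m (n + 1) = raney p (m + p) n := by
  cases n with
  | zero => simp [raney]
  | succ n =>
    have pascal₁ := Ring.choose_succ_succ (p * (n + 2) + m) (n + 1)
    have pascal₂ := Ring.choose_succ_succ (p * (n + 2) + m - 1) n
    simp only [raney]
    push_cast
    ring_nf at pascal₁ pascal₂ ⊢
    linear_combination pascal₁ - p * pascal₂

theorem sum_antidiagonal_raney_mul_raney (p a b : ℤ) (n : ℕ) :
    ∑ x ∈ antidiagonal n, raney p a x.1 * raney p b x.2 = raney p (a + b) n := by
  induction n generalizing a b with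
  | zero => simp [raney]
  | succ n ih =>
    set S : ℤ → ℤ := fun a => ∑ x ∈ antidiagonal (n + 1), raney p a x.1 * raney p b x.2
    have hS0 : S 0 = raney p b (n + 1) := by
      simp [S, Nat.sum_antidiagonal_succ, raney_zero_succ]
    -- `S a - raney p (a + b) (n + 1)` is invariant under `a ↦ a + 1` and vanishes at `a = 0`.
    have hS_succ : ∀ a,
        S (a + 1) - S a = raney p (a + 1 + b) (n + 1) - raney p (a + b) (n + 1) := by
      intro a
      calc S (a + 1) - S a = ∑ x ∈ antidiagonal n, raney p (a + p) x.1 * raney p b x.2 := by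
            simp only [S, Nat.sum_antidiagonal_succ, raney_zero_right, add_sub_add_left_eq_sub,
              ← sum_sub_distrib, ← sub_mul, raney_add_one_sub_raney]
        _ = raney p (a + p + b) n := ih _ _
        _ = _ := by rw [add_right_comm a 1 b, raney_add_one_sub_raney, add_right_comm]
    show S a = _
    induction a using Int.induction_on with
    | zero => simpa using hS0
    | succ a h => linear_combination h + hS_succ a
    | pred a h =>
      have := hS_succ (-(a : ℤ) - 1)
      simp only [sub_add_cancel] at this
      linear_combination h - this

theorem sum_antidiagonal_neg_raney_neg_mul_raney (p m : ℤ) (n : ℕ) :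
    ∑ x ∈ antidiagonal n, -raney p (-m) (x.1 + 1) * raney p m x.2 = raney p m (n + 1) := by
  have := sum_antidiagonal_raney_mul_raney p (-m) m (n + 1)
  rw [neg_add_cancel, raney_zero_succ, Nat.sum_antidiagonal_succ, raney_zero_right, one_mul] at this
  simp only [neg_mul, sum_neg_distrib]
  linear_combination -this

theorem sum_range_raney_eq_neg_raney_neg (p : ℤ) (m n : ℕ) :
    ∑ a ∈ range m, raney p (p - 1 - a) n = -raney p (-m) (n + 1) := by
  have step : ∀ a : ℕ,
      raney p (-a) (n + 1) - raney p (-(a + 1 : ℕ)) (n + 1) = raney p (p - 1 - a) n := by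
    intro a
    have := raney_add_one_sub_raney p (-(a + 1 : ℕ)) n
    push_cast at this ⊢
    rw [show -((a:ℤ) + 1) + 1 = -a by ring, show -((a:ℤ) + 1) + p = p - 1 - a by ring] at this
    exact this
  rw [← sum_congr rfl fun a _ => step a, sum_range_sub' (fun a : ℕ => raney p (-a) (n + 1)),
    Nat.cast_zero, neg_zero, raney_zero_succ, zero_sub]

namespace LTree

theorem size_node (a : ℕ) (ts : List LTree) : (node a ts).size = 1 + (ts.map size).sum := by
  rw [size, List.attach_map_val]

theorem one_le_size : ∀ t : LTree, 1 ≤ t.size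
  | node a ts => by rw [size_node]; omega

end LTree

open LTree

theorem isRPlaneTree_node_iff {r a : ℕ} {ts : List LTree} :
    IsRPlaneTree r (node a ts) ↔
      (1 ≤ a ∧ a ≤ r) ∧ ∀ t ∈ ts, IsRPlaneTree r t ∧ a + t.label ≤ r + 1 := by
  simp only [IsRPlaneTree, LabelsLe, Valid]
  constructor
  · rintro ⟨⟨hroot, hlabels⟩, hedges⟩
    exact ⟨hroot, fun t ht => ⟨⟨hlabels t ht, (hedges t ht).2⟩, (hedges t ht).1⟩⟩
  · rintro ⟨hroot, hsub⟩
    exact ⟨⟨hroot, fun t ht => (hsub t ht).1.1⟩,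
      fun t ht => ⟨(hsub t ht).2, (hsub t ht).1.2⟩⟩

theorem IsRPlaneTree.label_le {r : ℕ} : ∀ {t : LTree}, IsRPlaneTree r t → t.label ≤ r
  | node _ _, h => (isRPlaneTree_node_iff.1 h).1.2

def RTree (r m n : ℕ) : Type :=
  {t : LTree // t.size = n ∧ IsRPlaneTree r t ∧ t.label ≤ m}

def RForest (r m n : ℕ) : Type :=
  {ts : List LTree // (ts.map size).sum = n ∧ ∀ t ∈ ts, IsRPlaneTree r t ∧ t.label ≤ m}

instance (r m : ℕ) : Unique (RForest r m 0) where
  default := ⟨[], by simp⟩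
  uniq := by
    rintro ⟨_ | ⟨t, ts⟩, hsize, _⟩
    · rfl
    · simp only [List.map_cons, List.sum_cons] at hsize
      have := one_le_size t
      omega

def RForest.plant (r m n : ℕ) (x : Σ a : Fin (min m r), RForest r (r - a) n) :
    RTree r m (n + 1) :=
  ⟨node (x.1 + 1) x.2.1, by
    obtain ⟨⟨a, ha⟩, cs, hsize, hcs⟩ := x
    dsimp only at hcs ⊢
    refine ⟨by rw [size_node, hsize]; omega,
      isRPlaneTree_node_iff.2 ⟨by omega, fun c hc => ⟨(hcs c hc).1, ?_⟩⟩, ?_⟩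
    · have := (hcs c hc).2
      omega
    · show a + 1 ≤ m
      omega⟩

theorem RForest.plant_bijective (r m n : ℕ) : Function.Bijective (RForest.plant r m n) := by
  constructor
  · rintro ⟨⟨a, ha⟩, cs, _⟩ ⟨⟨a', ha'⟩, cs', _⟩ h
    obtain ⟨ha, rfl⟩ := node.inj (congrArg Subtype.val h)
    obtain rfl : a = a' := by simpa using ha
    rfl
  · rintro ⟨⟨b, cs⟩, hsize, htree, hb⟩
    obtain ⟨hroot, hcs⟩ := isRPlaneTree_node_iff.1 htree
    rw [size_node] at hsize
    simp only [label] at hb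
    refine ⟨⟨⟨b - 1, by omega⟩, cs, by omega, fun c hc => ⟨(hcs c hc).1, ?_⟩⟩, ?_⟩
    · have := (hcs c hc).2
      dsimp only
      omega
    · exact Subtype.ext (congrArg₂ node (by simp only; omega) rfl)

def RForest.cons (r m n : ℕ)
    (x : Σ s : antidiagonal n, RTree r m (s.1.1 + 1) × RForest r m s.1.2) :
    RForest r m (n + 1) :=
  ⟨x.2.1.1 :: x.2.2.1, by
    obtain ⟨⟨⟨i, j⟩, hij⟩, ⟨t, ht, htree, hroot⟩, ts, hts, htrees⟩ := x
    rw [HasAntidiagonal.mem_antidiagonal] at hij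
    dsimp only at ht hts ⊢
    refine ⟨by simp only [List.map_cons, List.sum_cons, ht, hts]; omega, ?_⟩
    rintro u (_ | ⟨_, hu⟩)
    exacts [⟨htree, hroot⟩, htrees u hu]⟩

theorem RForest.cons_bijective (r m n : ℕ) : Function.Bijective (RForest.cons r m n) := by
  constructor
  · rintro ⟨⟨⟨i, j⟩, _⟩, ⟨t, ht, _⟩, ts, hts, _⟩
      ⟨⟨⟨i', j'⟩, _⟩, ⟨t', ht', _⟩, ts', hts', _⟩ h
    obtain ⟨rfl, rfl⟩ := List.cons.inj (congrArg Subtype.val h)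
    dsimp only at ht ht' hts hts'
    obtain rfl : i = i' := by omega
    obtain rfl : j = j' := by omega
    rfl
  · rintro ⟨_ | ⟨t, ts⟩, hsize, htrees⟩
    · simp at hsize
    · simp only [List.map_cons, List.sum_cons] at hsize
      have := one_le_size t
      have ht := htrees t List.mem_cons_self
      have hmem : (t.size - 1, (ts.map size).sum) ∈ antidiagonal n := by
        rw [HasAntidiagonal.mem_antidiagonal]
        omega
      exact ⟨⟨⟨_, hmem⟩,
        ⟨t, (Nat.sub_add_cancel this).symm, ht⟩, ts, rfl,
        fun u hu => htrees u (List.mem_cons_of_mem _ hu)⟩, rfl⟩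

theorem RForest.finite (r n : ℕ) : ∀ m, Finite (RForest r m n) := by
  induction n using Nat.strong_induction_on with
  | _ n ih =>
  cases n with
  | zero => intro m; infer_instance
  | succ n =>
    intro m
    have (s : antidiagonal n) : Finite (RTree r m (s.1.1 + 1) × RForest r m s.1.2) := by
      have hs := HasAntidiagonal.mem_antidiagonal.1 s.2
      have := fun a : Fin (min m r) => ih s.1.1 (by omega) (r - a)
      have := ih s.1.2 (by omega) m
      have := Finite.of_surjective _ (RForest.plant_bijective r m s.1.1).2
      infer_instance
    exact Finite.of_surjective _ (RForest.cons_bijective r m n).2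

instance (r m n : ℕ) : Finite (RForest r m n) := RForest.finite r n m

instance (r m n : ℕ) : Finite (RTree r m (n + 1)) :=
  Finite.of_surjective _ (RForest.plant_bijective r m n).2

theorem card_rTree_succ (r m n : ℕ) :
    Nat.card (RTree r m (n + 1)) = ∑ a ∈ range (min m r), Nat.card (RForest r (r - a) n) := by
  rw [← Nat.card_eq_of_bijective _ (RForest.plant_bijective r m n), Nat.card_sigma,
    Fin.sum_univ_eq_sum_range (fun a => Nat.card (RForest r (r - a) n))]

theorem card_rForest_succ (r m n : ℕ) :
    Nat.card (RForest r m (n + 1)) =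
      ∑ s ∈ antidiagonal n, Nat.card (RTree r m (s.1 + 1)) * Nat.card (RForest r m s.2) := by
  rw [← Nat.card_eq_of_bijective _ (RForest.cons_bijective r m n), Nat.card_sigma,
    ← sum_coe_sort (antidiagonal n)]
  simp only [Nat.card_prod]

theorem natCast_card_rTree_succ {r m n : ℕ} (hm : m ≤ r)
    (hforest : ∀ m' ≤ r, (Nat.card (RForest r m' n) : ℤ) = raney (r + 1) m' n) :
    (Nat.card (RTree r m (n + 1)) : ℤ) = -raney (r + 1) (-m) (n + 1) := by
  rw [card_rTree_succ, min_eq_left hm, ← sum_range_raney_eq_neg_raney_neg]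
  push_cast
  refine sum_congr rfl fun a ha => ?_
  rw [hforest _ (Nat.sub_le r a), Nat.cast_sub (by rw [mem_range] at ha; omega)]
  ring_nf

theorem natCast_card_rForest {r m : ℕ} (hm : m ≤ r) (n : ℕ) :
    (Nat.card (RForest r m n) : ℤ) = raney (r + 1) m n := by
  induction n using Nat.strong_induction_on generalizing m with
  | _ n ih =>
  cases n with
  | zero => simp
  | succ n =>
    rw [card_rForest_succ, ← sum_antidiagonal_neg_raney_neg_mul_raney]
    push_cast
    refine sum_congr rfl fun s hs => ?_
    have hs := HasAntidiagonal.mem_antidiagonal.1 hs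
    rw [natCast_card_rTree_succ hm fun m' hm' => ih s.1 (by omega) hm', ih s.2 (by omega) hm]

theorem rPlaneCount_eq_card_rTree (r k : ℕ) : rPlaneCount r k = Nat.card (RTree r r (k + 1)) :=
  Nat.card_congr <| Equiv.subtypeEquivRight fun _ =>
    ⟨fun ⟨hsize, htree⟩ => ⟨hsize, htree, htree.label_le⟩,
      fun ⟨hsize, htree, _⟩ => ⟨hsize, htree⟩⟩

theorem stmt7_general (r k : ℕ) :
    (k + 1) * rPlaneCount r k = r * Nat.choose ((r + 1) * k) k := by
  have hcount := natCast_card_rTree_succ (le_refl r) fun m hm => natCast_card_rForest hm k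
  have hclosed := succ_mul_raney_succ (r + 1) (-r) k
  rw [show ((r : ℤ) + 1) * (k + 1) + -r - 1 = ((r + 1) * k : ℕ) by push_cast; ring,
    Ring.choose_natCast] at hclosed
  zify
  rw [rPlaneCount_eq_card_rTree, hcount]
  linear_combination -hclosed

/-- Gu–Prodinger–Wagner: the number of `r`-plane trees on `k + 1` vertices equals
`(r / (k + 1)) · binom((r+1)k, k)`. -/
theorem stmt7 (r k : ℕ) (hr : 1 ≤ r) :
    (k + 1) * rPlaneCount r k = r * Nat.choose ((r + 1) * k) k :=
  stmt7_general r k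
end

section
/- Let X be an ℓ×ℓ matrix over a field whose (i,j)-entry is zero for (i,j) ∉ λ, where λ is a partition of length ℓ with λ_i ≥ ℓ - i + 1 for all i ∈ [ℓ] (i.e., λ contains the staircase). If for each i the entries X_{i,1}, ..., X_{i,λ_i} are generic (e.g., algebraically independent), then X is invertible. More precisely: for i.i.d. continuous complex entries on λ and zeros elsewhere, X is almost surely invertible if and only if λ_i ≥ ℓ - i + 1 for all i. -/
open MeasureTheory MvPolynomial

theorem MeasureTheory.Measure.ae_pi_of_ae_ae_cons {n : ℕ} {α : Type*} [MeasurableSpace α]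
    {ν : Fin (n + 1) → Measure α} [∀ i, SigmaFinite (ν i)] {P : (Fin (n + 1) → α) → Prop}
    (hP : MeasurableSet {ω | P ω})
    (h : ∀ᵐ y ∂Measure.pi fun j => ν j.succ, ∀ᵐ x ∂ν 0, P (Fin.cons x y)) :
    ∀ᵐ ω ∂Measure.pi ν, P ω := by
  set e := MeasurableEquiv.piFinSuccAbove (fun _ : Fin (n + 1) => α) 0
  have hcons : ⇑e.symm = fun z => Fin.cons z.1 z.2 := by
    funext z
    simp [e, Fin.consEquiv]
  have hP' : MeasurableSet {z : α × (Fin n → α) | P (Fin.cons z.1 z.2)} := by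
    simpa [hcons] using e.symm.measurable hP
  rw [← (measurePreserving_piFinSuccAbove ν 0).symm.map_eq,
    ae_map_iff e.symm.measurable.aemeasurable hP, hcons]
  exact (Measure.ae_prod_iff_ae_ae hP').2 ((Measure.ae_ae_comm hP').2 h)

theorem Polynomial.ae_eval_ne_zero {R : Type*} [CommRing R] [IsDomain R] [MeasurableSpace R]
    {ν : Measure R} [NullSingletonClass ν] {f : Polynomial R} (hf : f ≠ 0) :
    ∀ᵐ x ∂ν, f.eval x ≠ 0 :=
  measure_mono_null (fun _ hx => not_not.mp hx) ((finite_setOfPred_isRoot hf).measure_zero ν)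

namespace MvPolynomial

theorem ae_eval_ne_zero_of_fin {𝕜 : Type*} [RCLike 𝕜] {n : ℕ} {ν : Fin n → Measure 𝕜}
    [∀ i, SigmaFinite (ν i)]
    {p : MvPolynomial (Fin n) 𝕜} (hp : p ≠ 0) (hν : ∀ i ∈ p.vars, NullSingletonClass (ν i)) :
    ∀ᵐ ω ∂Measure.pi ν, eval ω p ≠ 0 := by
  induction n with
  | zero =>
    obtain ⟨c, rfl⟩ := C_surjective (Fin 0) p
    exact .of_forall fun _ => by simpa using hp
  | succ n ih =>
    set q := finSuccEquiv 𝕜 n p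
    have hq : q ≠ 0 := (map_ne_zero_iff _ (finSuccEquiv 𝕜 n).injective).mpr hp
    have hlead : ∀ᵐ y ∂Measure.pi fun j => ν j.succ, eval y q.leadingCoeff ≠ 0 := by
      refine ih (Polynomial.leadingCoeff_ne_zero.mpr hq) fun j hj => hν j.succ ?_
      rw [mem_vars_iff_degreeOf_ne_zero] at hj ⊢
      exact (Nat.pos_of_ne_zero hj).trans_le (degreeOf_coeff_finSuccEquiv p j _) |>.ne'
    refine Measure.ae_pi_of_ae_ae_cons
      ((continuous_eval p).measurable (measurableSet_singleton 0).compl) ?_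
    filter_upwards [hlead] with y hy
    have hlead_y : (q.map (eval y)).leadingCoeff ≠ 0 := by
      rwa [Polynomial.leadingCoeff_map_of_leadingCoeff_ne_zero _ hy]
    simp only [eval_eq_eval_mv_eval']
    by_cases h0 : 0 ∈ p.vars
    · have := hν 0 h0
      exact Polynomial.ae_eval_ne_zero (Polynomial.leadingCoeff_ne_zero.mp hlead_y)
    · have hdeg : (q.map (eval y)).natDegree = 0 := by
        rw [Polynomial.natDegree_map_of_leadingCoeff_ne_zero _ hy, natDegree_finSuccEquiv]
        simpa [mem_vars_iff_degreeOf_ne_zero] using h0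
      refine .of_forall fun x => ?_
      rwa [Polynomial.eq_C_of_natDegree_eq_zero hdeg, Polynomial.eval_C, ← hdeg]

theorem ae_eval_ne_zero {𝕜 ι : Type*} [RCLike 𝕜] [Fintype ι] {ν : ι → Measure 𝕜}
    [∀ i, SigmaFinite (ν i)]
    {p : MvPolynomial ι 𝕜} (hp : p ≠ 0) (hν : ∀ i ∈ p.vars, NullSingletonClass (ν i)) :
    ∀ᵐ ω ∂Measure.pi ν, eval ω p ≠ 0 := by
  let e := Fintype.equivFin ι
  have hmp := measurePreserving_piCongrLeft (fun i => ν i) e.symm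
  rw [← hmp.map_eq, (MeasurableEquiv.piCongrLeft _ e.symm).measurableEmbedding.ae_map_iff]
  have := ae_eval_ne_zero_of_fin (ν := fun j => ν (e.symm j)) (p := rename e p)
    ((map_ne_zero_iff _ (rename_injective _ e.injective)).mpr hp) fun j hj => by
      obtain ⟨i, hi, rfl⟩ := Finset.mem_image.mp (vars_rename e p hj)
      simpa using hν i hi
  filter_upwards [this] with ω hω
  convert hω using 1
  rw [eval_rename]
  congr 2 with i
  simpa using MeasurableEquiv.piCongrLeft_apply_apply (β := fun _ => 𝕜) e.symm ω (e i)

end MvPolynomial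

namespace Matrix

variable {n R : Type*} [Fintype n] [DecidableEq n] [CommRing R]

theorem det_eq_zero_of_card_lt {M : Matrix n n R} {s t : Finset n} (hst : t.card < s.card)
    (hM : ∀ i ∈ s, ∀ j ∉ t, M i j = 0) : M.det = 0 := by
  refine (det_apply M).trans (Finset.sum_eq_zero fun σ _ => ?_)
  obtain ⟨j, hj, hjt⟩ := Finset.exists_mem_notMem_of_card_lt_card
    (hst.trans_eq (s.card_map σ.symm.toEmbedding).symm)
  have hσj : σ j ∈ s := by simpa using hj
  rw [Finset.prod_eq_zero (f := fun i => M (σ i) i) (Finset.mem_univ j) (hM _ hσj j hjt), smul_zero]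

variable (R) in
noncomputable def mvPolynomialXOn (S : Set (n × n)) [DecidablePred (· ∈ S)] :
    Matrix n n (MvPolynomial (n × n) R) :=
  of fun i j => if (i, j) ∈ S then X (i, j) else 0

variable {S : Set (n × n)} [DecidablePred (· ∈ S)]

theorem det_mvPolynomialXOn_mem_supported : (mvPolynomialXOn R S).det ∈ supported R S := by
  rw [det_apply]
  refine Subalgebra.sum_mem _ fun σ _ =>
    Subalgebra.zsmul_mem _ (Subalgebra.prod_mem _ fun j _ => ?_) _
  simp only [mvPolynomialXOn, of_apply]
  split_ifs with h
  · exact Algebra.subset_adjoin ⟨_, h, rfl⟩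
  · exact Subalgebra.zero_mem _

theorem eval_det_mvPolynomialXOn {ω : n × n → R} (hω : ∀ q ∉ S, ω q = 0) :
    eval ω (mvPolynomialXOn R S).det = (of fun i j => ω (i, j)).det := by
  rw [RingHom.map_det]
  congr 1 with i j
  by_cases h : (i, j) ∈ S <;> simp [mvPolynomialXOn, h, hω]

theorem det_mvPolynomialXOn_ne_zero [Nontrivial R] (σ : Equiv.Perm n) (hσ : ∀ i, (i, σ i) ∈ S) :
    (mvPolynomialXOn R S).det ≠ 0 := by
  let ω : n × n → R := fun q => if σ q.1 = q.2 then 1 else 0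
  have hω : ∀ q ∉ S, ω q = 0 := fun q hq => if_neg fun h => hq (by simpa [h] using hσ q.1)
  have hperm : (of fun i j => ω (i, j)) = σ.permMatrix R := by
    ext i j
    simp [ω, Equiv.Perm.permMatrix, PEquiv.toMatrix_apply]
  intro h
  have := eval_det_mvPolynomialXOn hω
  rw [h, map_zero, hperm, det_permutation] at this
  rcases Int.units_eq_one_or (Equiv.Perm.sign σ) with hs | hs <;> simp [hs] at this

end Matrix

open Matrix in
theorem det_eq_zero_of_lt_staircase {R : Type*} [CommRing R] {L : ℕ → ℕ} {l i : ℕ}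
    (hmono : ∀ i j, 1 ≤ i → i ≤ j → L j ≤ L i) (hi : 1 ≤ i) (hil : i ≤ l) (hLi : L i < l - i + 1)
    {M : Matrix (Fin l) (Fin l) R} (hM : ∀ a b : Fin l, ¬ cellMem L (a + 1) (b + 1) → M a b = 0) :
    M.det = 0 := by
  refine det_eq_zero_of_card_lt (s := Finset.Ici ⟨i - 1, by omega⟩)
    (t := Finset.Iio ⟨L i, by omega⟩) (by simp only [Fin.card_Ici, Fin.card_Iio]; omega)
    fun a ha b hb => hM a b ?_
  simp only [Finset.mem_Ici, Finset.mem_Iio, not_lt, Fin.le_def] at ha hb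
  rintro ⟨-, -, hab⟩
  have := hmono i (a + 1) hi (by omega)
  omega

theorem cellMem_rev_of_staircase {L : ℕ → ℕ} {l : ℕ} (hst : ∀ i, 1 ≤ i → i ≤ l → l - i + 1 ≤ L i)
    (a : Fin l) : cellMem L (a + 1) (a.rev + 1) := by
  have := hst (a + 1) (by omega) a.isLt
  refine ⟨by omega, by omega, ?_⟩
  rw [Fin.val_rev]
  omega

open MeasureTheory in
open scoped Classical in
theorem stmt13_general (l : ℕ) (L : ℕ → ℕ) (hL : IsPartitionOfLength L l)
    (μ : Measure ℂ) [IsProbabilityMeasure μ] (hμ : μ ≪ volume) :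
    (∀ᵐ ω ∂(Measure.pi fun p : Fin l × Fin l =>
        if cellMem L (p.1.val + 1) (p.2.val + 1) then μ else Measure.dirac 0),
      (Matrix.of fun i j : Fin l => ω (i, j)).det ≠ 0) ↔
    ∀ i, 1 ≤ i → i ≤ l → l - i + 1 ≤ L i := by
  set S : Set (Fin l × Fin l) := {q | cellMem L (q.1.val + 1) (q.2.val + 1)}
  set ν : Fin l × Fin l → Measure ℂ := fun q =>
    if cellMem L (q.1.val + 1) (q.2.val + 1) then μ else Measure.dirac 0
  have hzero : ∀ᵐ ω ∂Measure.pi ν, ∀ q ∉ S, ω q = 0 := by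
    refine Measure.ae_pi_le_pi
      (Filter.eventually_pi (p := fun q x => q ∉ S → x = 0) fun q => ?_)
    by_cases hq : q ∈ S
    · exact .of_forall fun _ h => absurd hq h
    · simp [ν, show ¬cellMem L _ _ from hq, ae_dirac_eq]
  constructor
  · intro hae
    by_contra! ⟨i, hi, hil, hLi⟩
    obtain ⟨ω, hdet, hω⟩ := (hae.and hzero).exists
    exact hdet (det_eq_zero_of_lt_staircase hL.1 hi hil hLi fun a b hab => hω (a, b) hab)
  · intro hst
    have hP := Matrix.det_mvPolynomialXOn_ne_zero (R := ℂ) (S := S) Fin.revPerm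
      (cellMem_rev_of_staircase hst)
    have hvars : ∀ q ∈ (Matrix.mvPolynomialXOn ℂ S).det.vars, NullSingletonClass (ν q) := by
      intro q hq
      have hqS : q ∈ S := mem_supported.mp Matrix.det_mvPolynomialXOn_mem_supported hq
      simpa [ν, show cellMem L _ _ from hqS] using
        (⟨fun x => hμ (measure_singleton x)⟩ : NullSingletonClass μ)
    filter_upwards [ae_eval_ne_zero hP hvars, hzero] with ω hω hωS
    rwa [Matrix.eval_det_mvPolynomialXOn hωS] at hω

open MeasureTheory in
open scoped Classical in
/-- A `λ`-shaped random matrix with i.i.d. absolutely continuous entries on `λ`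
(and zeros elsewhere) is almost surely invertible iff `λ_i ≥ ℓ - i + 1` for all
`i ∈ [ℓ]`, i.e. iff `λ` contains the staircase. -/
theorem stmt13 (l : ℕ) (hl : 1 ≤ l) (L : ℕ → ℕ) (hL : IsPartitionOfLength L l)
    (μ : Measure ℂ) [IsProbabilityMeasure μ] (hμ : μ ≪ volume) :
    (∀ᵐ ω ∂(Measure.pi fun p : Fin l × Fin l =>
        if cellMem L (p.1.val + 1) (p.2.val + 1) then μ else Measure.dirac 0),
      (Matrix.of fun i j : Fin l => ω (i, j)).det ≠ 0) ↔
    ∀ i, 1 ≤ i → i ≤ l → l - i + 1 ≤ L i :=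
  stmt13_general l L hL μ hμ
end

section
/- Let λ be a self-conjugate partition of length ℓ with multirectangular heights (a_1,...,a_r). Then #{i ∈ [ℓ] : λ_i < ℓ - i + 1} = Σ_{j=2}^{r} max{0, min{a_{≥j} − a_{≤ r−j+1}, a_j}}, where a_{≤n} = a_1 + ... + a_n and a_{≥n} = a_n + ... + a_r. -/
open Finset

theorem Finset.sum_Ioc_eq_sum_Icc_sum_Ioc_of_monotone {M : Type*} [AddCommMonoid M]
    {f : ℕ → ℕ} (hf : Monotone f) (g : ℕ → M) (n : ℕ) :
    ∑ i ∈ Ioc (f 0) (f n), g i = ∑ j ∈ Icc 1 n, ∑ i ∈ Ioc (f (j - 1)) (f j), g i := by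
  induction n with
  | zero => simp
  | succ n ih =>
    rw [sum_Icc_succ_top (by omega), ← ih, Nat.add_sub_cancel,
      sum_Ioc_consecutive _ (hf n.zero_le) (hf n.le_succ)]

theorem Finset.card_filter_Ioc_eq_sum_Icc_card_filter_Ioc_of_monotone {f : ℕ → ℕ}
    (hf : Monotone f) (p : ℕ → Prop) [DecidablePred p] (n : ℕ) :
    #{i ∈ Ioc (f 0) (f n) | p i} = ∑ j ∈ Icc 1 n, #{i ∈ Ioc (f (j - 1)) (f j) | p i} := by
  simpa only [card_filter] using
    sum_Ioc_eq_sum_Icc_sum_Ioc_of_monotone hf (fun i => if p i then 1 else 0) n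

-- `a_{≤ n}`
def partialSum (a : ℕ → ℕ) (n : ℕ) : ℕ := ∑ m ∈ Icc 1 n, a m

@[simp]
lemma partialSum_zero (a : ℕ → ℕ) : partialSum a 0 = 0 := by
  simp [partialSum]

lemma partialSum_mono (a : ℕ → ℕ) : Monotone (partialSum a) := fun _ _ h =>
  sum_le_sum_of_subset (Icc_subset_Icc_right h)

lemma partialSum_sub_one_add_sum_Icc (a : ℕ → ℕ) {j n : ℕ} (hj : 1 ≤ j) (hjn : j ≤ n + 1) :
    partialSum a (j - 1) + ∑ m ∈ Icc j n, a m = partialSum a n := by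
  obtain ⟨k, rfl⟩ : ∃ k, j = k + 1 := ⟨j - 1, by omega⟩
  simp only [partialSum, Nat.add_sub_cancel, ← Ico_add_one_right_eq_Icc]
  exact sum_Ico_consecutive _ (by omega) (by omega)

lemma partialSum_sub_one_add_self (a : ℕ → ℕ) {j : ℕ} (hj : 1 ≤ j) :
    partialSum a (j - 1) + a j = partialSum a j := by
  simpa using partialSum_sub_one_add_sum_Icc a hj j.le_succ

lemma card_filter_lt_sub_add_one_Ioc_partialSum {r : ℕ} {a L : ℕ → ℕ}
    (hL : ∀ n i, 1 ≤ n → n ≤ r → partialSum a (n - 1) < i → i ≤ partialSum a n →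
      L i = partialSum a (r - n + 1))
    {j : ℕ} (hj : 1 ≤ j) (hjr : j ≤ r) :
    #{i ∈ Ioc (partialSum a (j - 1)) (partialSum a j) | L i < partialSum a r - i + 1} =
      min (partialSum a j) (partialSum a r - partialSum a (r - j + 1)) - partialSum a (j - 1) := by
  have hconj : partialSum a (r - j + 1) ≤ partialSum a r := partialSum_mono a (by omega)
  have hj_le : partialSum a j ≤ partialSum a r := partialSum_mono a hjr
  suffices hblock : {i ∈ Ioc (partialSum a (j - 1)) (partialSum a j) |
      L i < partialSum a r - i + 1} =
      Ioc (partialSum a (j - 1)) (min (partialSum a j) (partialSum a r - partialSum a (r - j + 1))) by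
    rw [hblock, Nat.card_Ioc]
  ext i
  simp only [mem_filter, mem_Ioc, le_min_iff]
  constructor
  · rintro ⟨⟨hlo, hhi⟩, hlt⟩
    rw [hL j i hj hjr hlo hhi] at hlt
    omega
  · rintro ⟨hlo, hhi, hle⟩
    rw [hL j i hj hjr hlo hhi]
    omega

lemma natCast_min_sub_partialSum (a : ℕ → ℕ) {r j : ℕ} (hj : 1 ≤ j) (hjr : j ≤ r) :
    ((min (partialSum a j) (partialSum a r - partialSum a (r - j + 1)) - partialSum a (j - 1) :
        ℕ) : ℤ) =
      max 0 (min ((∑ m ∈ Icc j r, (a m : ℤ)) - ∑ m ∈ Icc 1 (r - j + 1), (a m : ℤ)) (a j)) := by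
  have htail := partialSum_sub_one_add_sum_Icc a hj (by omega : j ≤ r + 1)
  have hstep := partialSum_sub_one_add_self a hj
  have hconj : partialSum a (r - j + 1) ≤ partialSum a r := partialSum_mono a (by omega)
  rw [← Nat.cast_sum, ← Nat.cast_sum]
  change _ = max 0 (min (_ - (partialSum a (r - j + 1) : ℤ)) _)
  omega

theorem stmt14_general (r : ℕ) (a : ℕ → ℕ)
    (l : ℕ) (hl : l = ∑ m ∈ Finset.Icc 1 r, a m)
    (L : ℕ → ℕ)
    (hL : ∀ n i, 1 ≤ n → n ≤ r → (∑ m ∈ Finset.Icc 1 (n - 1), a m) < i →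
        i ≤ ∑ m ∈ Finset.Icc 1 n, a m → L i = ∑ m ∈ Finset.Icc 1 (r - n + 1), a m) :
    (((Finset.Icc 1 l).filter (fun i => L i < l - i + 1)).card : ℤ) =
      ∑ j ∈ Finset.Icc 2 r,
        max 0 (min ((∑ m ∈ Finset.Icc j r, (a m : ℤ)) - ∑ m ∈ Finset.Icc 1 (r - j + 1), (a m : ℤ))
          (a j : ℤ)) := by
  change l = partialSum a r at hl
  subst hl
  have hIcc : Icc 1 (partialSum a r) = Ioc (partialSum a 0) (partialSum a r) := by
    rw [partialSum_zero, ← Icc_add_one_left_eq_Ioc, zero_add]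
  rw [hIcc, card_filter_Ioc_eq_sum_Icc_card_filter_Ioc_of_monotone (partialSum_mono a),
    sum_congr rfl fun j hj =>
      card_filter_lt_sub_add_one_Ioc_partialSum hL (mem_Icc.1 hj).1 (mem_Icc.1 hj).2,
    ← sum_subset (Icc_subset_Icc_left one_le_two) fun j hj hj2 => ?first_block, Nat.cast_sum]
  · exact sum_congr rfl fun j hj =>
      natCast_min_sub_partialSum a (one_le_two.trans (mem_Icc.1 hj).1) (mem_Icc.1 hj).2
  · simp only [mem_Icc] at hj hj2
    obtain rfl : j = 1 := by omega
    simp [Nat.sub_add_cancel hj.2]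

/-- `#{i ∈ [ℓ] : λ_i < ℓ - i + 1} = Σ_{j=2}^r max{0, min{a_{≥j} − a_{≤ r−j+1}, a_j}}`. -/
theorem stmt14 (r : ℕ) (hr : 1 ≤ r) (a : ℕ → ℕ)
    (ha : ∀ n, 1 ≤ n → n ≤ r → 1 ≤ a n)
    (l : ℕ) (hl : l = ∑ m ∈ Finset.Icc 1 r, a m)
    (L : ℕ → ℕ)
    (hL : ∀ n i, 1 ≤ n → n ≤ r → (∑ m ∈ Finset.Icc 1 (n - 1), a m) < i →
        i ≤ ∑ m ∈ Finset.Icc 1 n, a m → L i = ∑ m ∈ Finset.Icc 1 (r - n + 1), a m) :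
    (((Finset.Icc 1 l).filter (fun i => L i < l - i + 1)).card : ℤ) =
      ∑ j ∈ Finset.Icc 2 r,
        max 0 (min ((∑ m ∈ Finset.Icc j r, (a m : ℤ)) - ∑ m ∈ Finset.Icc 1 (r - j + 1), (a m : ℤ))
          (a j : ℤ)) :=
  stmt14_general r a l hl L hL
end
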